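/- arXiv:2202.02371 — 2 statements merged into one kernel-verified Lean document; each statement's English description precedes it below -/
import Mathlib

section
/- Let K ≥ 1 and N ≥ 1 be integers. For each i ∈ {1,…,N} let p̂_i and p̃_i be probability vectors in the (K−1)-simplex (i.e., p̂_{ik} ≥ 0, p̃_{ik} ≥ 0 and Σ_k p̂_{ik} = Σ_k p̃_{ik} = 1), and assume all entries p̂_{ik} and p̃_{ik} are strictly positive. Define the joint distribution matrix P_joint by P_joint^{(j,k)} = (1/N) Σ_{i=1}^N p̂_{ij} · p̃_{ik}. Let u be the uniform vector with u_k = 1/K for all k, and for probability vectors q with positive entries define the cross-entropy H(u, q) = −(1/K) Σ_{k=1}^K log q_k. Then the cross-entropy between the diagonal matrix (1/K)·I_K and P_joint, namely H((1/K)I_K, P_joint) = −(1/K) Σ_{k=1}^K log P_joint^{(k,k)}, satisfies log K ≤ H((1/K)I_K, P_joint) ≤ (1/N) Σ_{i=1}^N [ H(u, p̂_i) + H(u, p̃_i) ]. -/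
/-!
Both bounds are Jensen's inequality for the concave `log` with uniform weights. Averaging over
clusters `k` and using `tr P_joint = (1/N) Σᵢ ⟨p̂ᵢ, p̃ᵢ⟩ ≤ 1` gives the lower bound; averaging over
samples `i` in `P_joint^{(k,k)} = (1/N) Σᵢ p̂ᵢₖ p̃ᵢₖ` and then over `k` gives the upper bound.
-/

open Finset Real

lemma mean_log_le_log_mean {ι : Type*} [Fintype ι] {x : ι → ℝ} (hx : ∀ i, 0 < x i) :
    (1 / (Fintype.card ι : ℝ)) * ∑ i, log (x i) ≤
      log ((1 / (Fintype.card ι : ℝ)) * ∑ i, x i) := by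
  cases isEmpty_or_nonempty ι
  · simp
  simpa [mul_sum] using strictConcaveOn_log_Ioi.concaveOn.le_map_sum
    (t := univ) (w := fun _ => 1 / (Fintype.card ι : ℝ)) (p := x) (fun _ _ => by positivity)
    (by simp) (fun i _ => hx i)

lemma log_card_le_neg_mean_log {ι : Type*} [Fintype ι] {x : ι → ℝ} (hx : ∀ i, 0 < x i)
    (hsum : ∑ i, x i ≤ 1) :
    log (Fintype.card ι) ≤ -(1 / (Fintype.card ι : ℝ)) * ∑ i, log (x i) := by
  cases isEmpty_or_nonempty ι
  · simp
  have hmean_pos : 0 < (1 / (Fintype.card ι : ℝ)) * ∑ i, x i := by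
    have := sum_pos (fun i _ => hx i) univ_nonempty
    positivity
  have hlog_mean : log ((1 / (Fintype.card ι : ℝ)) * ∑ i, x i) ≤ -log (Fintype.card ι) := by
    rw [← log_inv, ← one_div]
    exact log_le_log hmean_pos (mul_le_of_le_one_right (by positivity) hsum)
  linarith [mean_log_le_log_mean hx]

lemma sum_mul_le_one_of_mem_stdSimplex {ι : Type*} [Fintype ι] {p q : ι → ℝ}
    (hp : p ∈ stdSimplex ℝ ι) (hq : q ∈ stdSimplex ℝ ι) : ∑ i, p i * q i ≤ 1 :=
  calc ∑ i, p i * q i ≤ ∑ i, p i :=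
        sum_le_sum fun i _ => mul_le_of_le_one_right (hp.1 i) (mem_Icc_of_mem_stdSimplex hq i).2
    _ = 1 := hp.2

lemma sum_mean_sum_mul_le_one {ι κ : Type*} [Fintype ι] [Nonempty ι] [Fintype κ]
    {p q : ι → κ → ℝ} (hp : ∀ i, p i ∈ stdSimplex ℝ κ) (hq : ∀ i, q i ∈ stdSimplex ℝ κ) :
    ∑ k, (1 / (Fintype.card ι : ℝ)) * ∑ i, p i k * q i k ≤ 1 := by
  rw [← mul_sum, sum_comm]
  calc (1 / (Fintype.card ι : ℝ)) * ∑ i, ∑ k, p i k * q i k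
      ≤ (1 / (Fintype.card ι : ℝ)) * ∑ _i : ι, (1 : ℝ) := by
        gcongr with i
        exact sum_mul_le_one_of_mem_stdSimplex (hp i) (hq i)
    _ = 1 := by simp

theorem stmt_0_general (K N : ℕ) (hN : 1 ≤ N)
    (phat ptil : Fin N → Fin K → ℝ)
    (hphat_pos : ∀ i k, 0 < phat i k) (hptil_pos : ∀ i k, 0 < ptil i k)
    (hphat_sum : ∀ i, ∑ k, phat i k = 1) (hptil_sum : ∀ i, ∑ k, ptil i k = 1)
    (P : Fin K → Fin K → ℝ)
    (hP : ∀ j k, P j k = (1 / (N : ℝ)) * ∑ i, phat i j * ptil i k) :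
    Real.log K ≤ -(1 / (K : ℝ)) * ∑ k, Real.log (P k k) ∧
    -(1 / (K : ℝ)) * ∑ k, Real.log (P k k) ≤
      (1 / (N : ℝ)) * ∑ i,
        ((-(1 / (K : ℝ)) * ∑ k, Real.log (phat i k)) +
         (-(1 / (K : ℝ)) * ∑ k, Real.log (ptil i k))) := by
  have : NeZero N := ⟨by omega⟩
  have hprod_pos i k : 0 < phat i k * ptil i k := mul_pos (hphat_pos i k) (hptil_pos i k)
  have hdiag_pos k : 0 < P k k := by
    rw [hP]
    have := sum_pos (fun i _ => hprod_pos i k) univ_nonempty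
    positivity
  have hdiag_ge k : (1 / (N : ℝ)) * ∑ i, (log (phat i k) + log (ptil i k)) ≤ log (P k k) := by
    simpa [hP, log_mul (hphat_pos _ k).ne' (hptil_pos _ k).ne'] using
      mean_log_le_log_mean (hprod_pos · k)
  constructor
  · have htrace : ∑ k, P k k ≤ 1 := by
      simpa [hP] using sum_mean_sum_mul_le_one (p := phat) (q := ptil)
        (fun i => ⟨fun k => (hphat_pos i k).le, hphat_sum i⟩)
        (fun i => ⟨fun k => (hptil_pos i k).le, hptil_sum i⟩)
    simpa using log_card_le_neg_mean_log hdiag_pos htrace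
  · calc -(1 / (K : ℝ)) * ∑ k, log (P k k)
        ≤ -(1 / (K : ℝ)) * ∑ k, (1 / (N : ℝ)) * ∑ i, (log (phat i k) + log (ptil i k)) := by
          simp only [neg_mul, neg_le_neg_iff]
          gcongr with k
          exact hdiag_ge k
      _ = _ := by
          simp only [mul_sum, sum_add_distrib, mul_add]
          congr 1 <;> rw [sum_comm] <;> simp only [mul_left_comm]

/-- Proposition 1: for probability vectors `p̂ i` and `p̃ i` in the `(K-1)`-simplex with
strictly positive entries, the cross-entropy between the diagonal matrix `(1/K)·I_K` and the
joint matrix `P_joint` is bounded below by `log K` and above by the average of the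
cross-entropies of the individual cluster assignments against the uniform vector. -/
theorem stmt_0 (K N : ℕ) (hK : 1 ≤ K) (hN : 1 ≤ N)
    (phat ptil : Fin N → Fin K → ℝ)
    (hphat_pos : ∀ i k, 0 < phat i k) (hptil_pos : ∀ i k, 0 < ptil i k)
    (hphat_sum : ∀ i, ∑ k, phat i k = 1) (hptil_sum : ∀ i, ∑ k, ptil i k = 1)
    (P : Fin K → Fin K → ℝ)
    (hP : ∀ j k, P j k = (1 / (N : ℝ)) * ∑ i, phat i j * ptil i k) :
    Real.log K ≤ -(1 / (K : ℝ)) * ∑ k, Real.log (P k k) ∧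
    -(1 / (K : ℝ)) * ∑ k, Real.log (P k k) ≤
      (1 / (N : ℝ)) * ∑ i,
        ((-(1 / (K : ℝ)) * ∑ k, Real.log (phat i k)) +
         (-(1 / (K : ℝ)) * ∑ k, Real.log (ptil i k))) :=
  stmt_0_general K N hN phat ptil hphat_pos hptil_pos hphat_sum hptil_sum P hP
end

section
/- Let K ≥ 1 and N ≥ 1 be integers. For each i ∈ {1,…,N} let p̂_i and p̃_i be vectors in ℝ^K with strictly positive entries, and define P_joint^{(j,k)} = (1/N) Σ_{i=1}^N p̂_{ij} · p̃_{ik}. Then −(1/K) Σ_{k=1}^K log P_joint^{(k,k)} ≤ (1/N) Σ_{i=1}^N [ −(1/K) Σ_{k=1}^K log p̂_{ik} − (1/K) Σ_{k=1}^K log p̃_{ik} ], where log denotes the natural logarithm. -/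
/-- Upper-bound half of Proposition 1 (via Jensen's inequality): for vectors `p̂ i`, `p̃ i`
with strictly positive entries, the cross-entropy of the diagonal of the joint matrix against
the uniform distribution is at most the average of the individual cross-entropies. -/
theorem stmt_2 (K N : ℕ) (hK : 1 ≤ K) (hN : 1 ≤ N)
    (phat ptil : Fin N → Fin K → ℝ)
    (hphat_pos : ∀ i k, 0 < phat i k) (hptil_pos : ∀ i k, 0 < ptil i k)
    (P : Fin K → Fin K → ℝ)
    (hP : ∀ j k, P j k = (1 / (N : ℝ)) * ∑ i, phat i j * ptil i k) :
    -(1 / (K : ℝ)) * ∑ k, Real.log (P k k) ≤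
      (1 / (N : ℝ)) * ∑ i,
        ((-(1 / (K : ℝ)) * ∑ k, Real.log (phat i k)) +
         (-(1 / (K : ℝ)) * ∑ k, Real.log (ptil i k))) := by
  have hN0 : (0:ℝ) < N := by exact_mod_cast hN
  have hK0 : (0:ℝ) < K := by exact_mod_cast hK
  have key : ∀ k : Fin K,
      (1 / (N:ℝ)) * ∑ i, Real.log (phat i k * ptil i k) ≤ Real.log (P k k) := by
    intro k
    have := (StrictConcaveOn.concaveOn strictConcaveOn_log_Ioi).le_map_sum
      (t := Finset.univ) (w := fun _ : Fin N => 1 / (N:ℝ))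
      (p := fun i : Fin N => phat i k * ptil i k)
      (fun i _ => by positivity)
      (by simp [Finset.sum_const, Finset.card_univ]; field_simp)
      (fun i _ => Set.mem_Ioi.2 (mul_pos (hphat_pos i k) (hptil_pos i k)))
    simpa [hP, Finset.mul_sum, smul_eq_mul] using this
  calc -(1 / (K : ℝ)) * ∑ k, Real.log (P k k)
      ≤ -(1 / (K : ℝ)) * ∑ k, (1 / (N:ℝ)) * ∑ i, Real.log (phat i k * ptil i k) := by
        rw [neg_mul, neg_mul, neg_le_neg_iff]
        apply mul_le_mul_of_nonneg_left (Finset.sum_le_sum fun k _ => key k) (by positivity)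
    _ = (1 / (N : ℝ)) * ∑ i,
        ((-(1 / (K : ℝ)) * ∑ k, Real.log (phat i k)) +
         (-(1 / (K : ℝ)) * ∑ k, Real.log (ptil i k))) := by
        have h1 : ∀ i : Fin N, (-(1/(K:ℝ)) * ∑ k, Real.log (phat i k)) +
            (-(1/(K:ℝ)) * ∑ k, Real.log (ptil i k)) =
            -(1/(K:ℝ)) * ∑ k, (Real.log (phat i k) + Real.log (ptil i k)) := by
          intro i; rw [Finset.sum_add_distrib]; ring
        have h2 : (∑ i : Fin N, ((-(1/(K:ℝ)) * ∑ k, Real.log (phat i k)) +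
            (-(1/(K:ℝ)) * ∑ k, Real.log (ptil i k)))) =
            -(1/(K:ℝ)) * ∑ i : Fin N, ∑ k,
              (Real.log (phat i k) + Real.log (ptil i k)) := by
          simp only [h1, ← Finset.mul_sum]
        rw [h2, ← Finset.mul_sum, Finset.sum_comm]
        simp only [Real.log_mul (hphat_pos _ _).ne' (hptil_pos _ _).ne']
        ring
end
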